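/- Let f be in B(X,P). If there exists a cardinal lambda1 with successor lambda2 = lambda1 + 1 such that for every i in I the cardinal |f(X_i)| belongs to {lambda1, lambda2}, then the D-class and the J-class of f in B(X,P) coincide: for every g in B(X,P), f J g if and only if f D g. -/

import Mathlib

open Cardinal

/-- `P : I → Set X` is a partition of `X`: blocks are nonempty, pairwise disjoint,
and cover `X`. -/
def IsPartition {X I : Type*} (P : I → Set X) : Prop :=
  (∀ i, (P i).Nonempty) ∧ Pairwise (Function.onFun Disjoint P) ∧ ∀ x, ∃ i, x ∈ P i

/-- `f` belongs to `B(X,P)` with character `χ`: `f` maps each block `P i` into the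
block `P (χ i)`, and `χ` is a bijection of the index set. -/
def MemB {X I : Type*} (P : I → Set X) (f : X → X) (χ : I → I) : Prop :=
  (∀ i, Set.MapsTo f (P i) (P (χ i))) ∧ Function.Bijective χ

/-- Green's `L` relation on `B(X,P)` (left-to-right composition: `f = hg` means
`f x = g (h x)`). -/
def GreenL {X I : Type*} (P : I → Set X) (f g : X → X) : Prop :=
  ∃ h χh h' χh', MemB P h χh ∧ MemB P h' χh' ∧
    (∀ x, f x = g (h x)) ∧ (∀ x, g x = f (h' x))

/-- Green's `R` relation on `B(X,P)` (`f = gh` means `f x = h (g x)`). -/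
def GreenR {X I : Type*} (P : I → Set X) (f g : X → X) : Prop :=
  ∃ h χh h' χh', MemB P h χh ∧ MemB P h' χh' ∧
    (∀ x, f x = h (g x)) ∧ (∀ x, g x = h' (f x))

/-- Green's `D` relation on `B(X,P)`. -/
def GreenD {X I : Type*} (P : I → Set X) (f g : X → X) : Prop :=
  ∃ k χk, MemB P k χk ∧ GreenL P f k ∧ GreenR P k g

/-- Green's `J` relation on `B(X,P)` (`f = h₁ g h₂` means `f x = h₂ (g (h₁ x))`). -/
def GreenJ {X I : Type*} (P : I → Set X) (f g : X → X) : Prop :=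
  (∃ h1 χ1 h2 χ2, MemB P h1 χ1 ∧ MemB P h2 χ2 ∧ ∀ x, f x = h2 (g (h1 x))) ∧
  (∃ h3 χ3 h4 χ4, MemB P h3 χ3 ∧ MemB P h4 χ4 ∧ ∀ x, g x = h4 (f (h3 x)))


/-!
If `f J g`, say `f = h₁ g h₂` and `g = h₃ f h₄`, then `|f(X_i)| ≤ |g(X_{χ₁ i})|` and
`|g(X_j)| ≤ |f(X_{χ₃ j})|` with `χ₁, χ₃` bijections of `I`. When the block ranks of `f` lie in
`{λ, λ + 1}`, so do those of `g`, and the two inequalities send blocks of rank `λ + 1` to blocks of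
rank `λ + 1` in both directions; by Schröder–Bernstein, applied separately to the blocks of rank
`λ + 1` and to the others, there is a permutation `π` of `I` with `|g(X_j)| = |f(X_{π j})|`.
Gluing bijections `g(X_j) → f(X_{π j})` gives `k ∈ B(X,P)` with the same block images as `f`
(so `f L k`) and the same kernel as `g` (so `k R g`).
-/

open Set

universe u

lemma exists_bijOn_of_mk_eq {α : Type*} {s t : Set α} (h : #s = #t) :
    ∃ u : α → α, BijOn u s t := by
  classical
  obtain ⟨e⟩ := Cardinal.eq.1 h
  refine ⟨fun y => if hy : y ∈ s then (e ⟨y, hy⟩ : α) else y, ?_, ?_, ?_⟩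
  · intro y hy
    simp only [dif_pos hy]
    exact (e ⟨y, hy⟩).2
  · intro y hy z hz hyz
    simp only [dif_pos hy, dif_pos hz] at hyz
    exact Subtype.mk_eq_mk.mp (e.injective (Subtype.ext hyz))
  · intro z hz
    refine ⟨e.symm ⟨z, hz⟩, (e.symm ⟨z, hz⟩).2, ?_⟩
    simp

lemma mk_image_le_of_eq_comp {α β : Type*} {γ δ : Type u} {f : α → δ} {h₁ : α → β}
    {g : β → γ} {h₂ : γ → δ} {s : Set α} {t : Set β} (hh₁ : MapsTo h₁ s t)
    (hf : ∀ x, f x = h₂ (g (h₁ x))) : #(f '' s) ≤ #(g '' t) :=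
  calc #(f '' s) = #(h₂ '' (g '' (h₁ '' s))) := by simp only [image_image, hf]
    _ ≤ #(g '' (h₁ '' s)) := mk_image_le
    _ ≤ #(g '' t) := mk_le_mk_of_subset (image_mono hh₁.image_subset)

lemma exists_perm_iff_of_mapsTo {ι : Type*} {p q : ι → Prop} (σ τ : Equiv.Perm ι)
    (hσ : ∀ i, p i → q (σ i)) (hτ : ∀ j, q j → p (τ j)) :
    ∃ π : Equiv.Perm ι, ∀ j, q j ↔ p (π j) := by
  classical
  obtain ⟨e⟩ := Function.Embedding.antisymm
    (τ.toEmbedding.subtypeMap hτ) (σ.toEmbedding.subtypeMap hσ)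
  obtain ⟨e'⟩ := Function.Embedding.antisymm
    (σ.symm.toEmbedding.subtypeMap (p := fun j => ¬q j) (q := fun i => ¬p i)
      fun j hj hp => hj (by simpa using hσ _ hp))
    (τ.symm.toEmbedding.subtypeMap fun i hi hq => hi (by simpa using hτ _ hq))
  refine ⟨Equiv.subtypeCongr e e', fun j => ?_⟩
  by_cases hj : q j
  · simpa [Equiv.subtypeCongr, hj] using (e ⟨j, hj⟩).2
  · simpa [Equiv.subtypeCongr, hj] using (e' ⟨j, hj⟩).2

section SuccOrder

variable {α : Type*} [LinearOrder α] [SuccOrder α] {a : α}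

lemma eq_of_mem_Icc_succ_of_iff {x y : α} (hx : x ∈ Icc a (Order.succ a))
    (hy : y ∈ Icc a (Order.succ a)) (h : x = Order.succ a ↔ y = Order.succ a) : x = y := by
  rcases Order.le_succ_iff_eq_or_le.1 hx.2 with hxs | hxa
  · rw [hxs, h.1 hxs]
  rcases Order.le_succ_iff_eq_or_le.1 hy.2 with hys | hya
  · rw [hys, h.2 hys]
  · rw [le_antisymm hxa hx.1, le_antisymm hya hy.1]

lemma exists_perm_eq_comp_of_le_of_le {ι : Type*} {μ ν : ι → α}
    (hμ : ∀ i, μ i = a ∨ μ i = Order.succ a) (σ τ : Equiv.Perm ι)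
    (hσ : ∀ i, μ i ≤ ν (σ i)) (hτ : ∀ j, ν j ≤ μ (τ j)) :
    ∃ π : Equiv.Perm ι, ∀ j, ν j = μ (π j) := by
  have hμIcc : ∀ i, μ i ∈ Icc a (Order.succ a) := fun i => by
    rcases hμ i with h | h <;> simp [h, Order.le_succ]
  have hνIcc : ∀ j, ν j ∈ Icc a (Order.succ a) := fun j =>
    ⟨(hμIcc (σ.symm j)).1.trans ((hσ _).trans_eq (by rw [σ.apply_symm_apply])),
      (hτ j).trans (hμIcc _).2⟩
  obtain ⟨π, hπ⟩ := exists_perm_iff_of_mapsTo (p := fun i => μ i = Order.succ a)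
    (q := fun j => ν j = Order.succ a) σ τ
    (fun i hi => le_antisymm (hνIcc _).2 (hi ▸ hσ i))
    (fun j hj => le_antisymm (hμIcc _).2 (hj ▸ hτ j))
  exact ⟨π, fun j => eq_of_mem_Icc_succ_of_iff (hνIcc j) (hμIcc _) (hπ j)⟩

end SuccOrder

namespace IsPartition

variable {X I : Type*} {P : I → Set X}

lemma eq_of_mem (hP : IsPartition P) {x : X} {i j : I} (hi : x ∈ P i) (hj : x ∈ P j) :
    i = j := by
  by_contra h
  exact disjoint_left.mp (hP.2.1 h) hi hj

noncomputable def index (hP : IsPartition P) (x : X) : I := (hP.2.2 x).choose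

lemma mem_index (hP : IsPartition P) (x : X) : x ∈ P (hP.index x) := (hP.2.2 x).choose_spec

lemma index_eq (hP : IsPartition P) {x : X} {i : I} (hi : x ∈ P i) : hP.index x = i :=
  hP.eq_of_mem (hP.mem_index x) hi

end IsPartition

namespace MemB

variable {X I : Type*} {P : I → Set X} {f g : X → X} {χf χg : I → I}

lemma comp (hf : MemB P f χf) (hg : MemB P g χg) : MemB P (g ∘ f) (χg ∘ χf) :=
  ⟨fun i => (hg.1 (χf i)).comp (hf.1 i), hg.2.comp hf.2⟩

lemma eq_of_apply_eq (hP : IsPartition P) (hf : MemB P f χf) {x y : X} {i j : I}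
    (hx : x ∈ P i) (hy : y ∈ P j) (hxy : f x = f y) : i = j :=
  hf.2.1 (hP.eq_of_mem (hf.1 i hx) (hxy ▸ hf.1 j hy))

lemma exists_comp_comp_eq_self (hP : IsPartition P) (hg : MemB P g χg) :
    ∃ s χs, MemB P s χs ∧ ∀ x, g (s (g x)) = g x := by
  classical
  let e := Equiv.ofBijective χg hg.2
  have key : ∀ y, ∃ z ∈ P (e.symm (hP.index y)), ∀ x, g x = y → g z = y := by
    intro y
    by_cases hy : ∃ x, g x = y
    · obtain ⟨x, rfl⟩ := hy
      refine ⟨x, ?_, fun _ _ => rfl⟩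
      rw [hP.index_eq (hg.1 _ (hP.mem_index x)), Equiv.ofBijective_symm_apply_apply]
      exact hP.mem_index x
    · obtain ⟨z, hz⟩ := hP.1 (e.symm (hP.index y))
      exact ⟨z, hz, fun x hx => absurd ⟨x, hx⟩ hy⟩
  choose s hs hgs using key
  exact ⟨s, e.symm, ⟨fun i y hy => hP.index_eq hy ▸ hs y, e.symm.bijective⟩,
    fun x => hgs _ x rfl⟩

end MemB

section Green

variable {X I : Type*} {P : I → Set X} {f g k : X → X} {χf χg χk : I → I}

lemma exists_eq_comp_of_ker_le (hP : IsPartition P) (hf : MemB P f χf) (hg : MemB P g χg)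
    (hker : ∀ x y, g x = g y → f x = f y) : ∃ h χh, MemB P h χh ∧ ∀ x, f x = h (g x) := by
  obtain ⟨s, χs, hs, hgs⟩ := hg.exists_comp_comp_eq_self hP
  exact ⟨f ∘ s, χf ∘ χs, hs.comp hf, fun x => hker _ _ (hgs x).symm⟩

lemma exists_eq_comp_of_image_eq (hP : IsPartition P) (σ : Equiv.Perm I)
    (him : ∀ i, f '' P i = k '' P (σ i)) : ∃ h χh, MemB P h χh ∧ ∀ x, f x = k (h x) := by
  have key : ∀ x, ∃ z ∈ P (σ (hP.index x)), k z = f x := fun x => by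
    rw [← mem_image, ← him]
    exact mem_image_of_mem f (hP.mem_index x)
  choose h hmem hval using key
  exact ⟨h, σ, ⟨fun i x hx => hP.index_eq hx ▸ hmem x, σ.bijective⟩, fun x => (hval x).symm⟩

lemma greenL_of_image_eq (hP : IsPartition P) (σ : Equiv.Perm I)
    (him : ∀ i, f '' P i = k '' P (σ i)) : GreenL P f k := by
  obtain ⟨h, χh, hh, hfk⟩ := exists_eq_comp_of_image_eq hP σ him
  obtain ⟨h', χh', hh', hkf⟩ :=
    exists_eq_comp_of_image_eq (f := k) (k := f) hP σ.symm fun i => by rw [him, σ.apply_symm_apply]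
  exact ⟨h, χh, h', χh', hh, hh', hfk, hkf⟩

lemma greenR_of_ker_eq (hP : IsPartition P) (hf : MemB P f χf) (hg : MemB P g χg)
    (hker : ∀ x y, f x = f y ↔ g x = g y) : GreenR P f g := by
  obtain ⟨h, χh, hh, hfg⟩ := exists_eq_comp_of_ker_le hP hf hg fun x y => (hker x y).2
  obtain ⟨h', χh', hh', hgf⟩ := exists_eq_comp_of_ker_le hP hg hf fun x y => (hker x y).1
  exact ⟨h, χh, h', χh', hh, hh', hfg, hgf⟩

lemma GreenD.greenJ (hD : GreenD P f g) : GreenJ P f g := by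
  obtain ⟨k, -, -, ⟨h, χh, h', χh', hh, hh', hfk, hkf⟩, ⟨l, χl, l', χl', hl, hl', hkg, hgk⟩⟩ := hD
  exact ⟨⟨h, χh, l, χl, hh, hl, fun x => by rw [hfk, hkg]⟩,
    ⟨h', χh', l', χl', hh', hl', fun x => by rw [hgk, hkf]⟩⟩

lemma exists_image_eq_and_ker_eq (hP : IsPartition P) (hf : MemB P f χf) (hg : MemB P g χg)
    (π : Equiv.Perm I) (hmk : ∀ j, #(g '' P j) = #(f '' P (π j))) :
    ∃ k χk, MemB P k χk ∧ (∀ j, k '' P j = f '' P (π j)) ∧ ∀ x y, k x = k y ↔ g x = g y := by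
  choose u hu using fun j => exists_bijOn_of_mk_eq (hmk j)
  set k := fun x => u (hP.index x) (g x)
  have k_of_mem : ∀ {j x}, x ∈ P j → k x = u j (g x) := fun hx => by
    simp only [k, hP.index_eq hx]
  have k_image : ∀ j, k '' P j = f '' P (π j) := fun j =>
    calc k '' P j = u j '' (g '' P j) := by
          rw [image_image]
          exact image_congr fun x hx => k_of_mem hx
      _ = f '' P (π j) := (hu j).image_eq
  have hk : MemB P k (χf ∘ π) :=
    ⟨fun j => (k_image j ▸ mapsTo_image k (P j)).mono_right (hf.1 (π j)).image_subset,
      hf.2.comp π.bijective⟩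
  refine ⟨k, χf ∘ π, hk, k_image, fun x y => ?_⟩
  have hx := hP.mem_index x
  constructor
  · intro hxy
    have hy : y ∈ P (hP.index x) := hk.eq_of_apply_eq hP hx (hP.mem_index y) hxy ▸ hP.mem_index y
    rw [k_of_mem hx, k_of_mem hy] at hxy
    exact (hu _).injOn (mem_image_of_mem g hx) (mem_image_of_mem g hy) hxy
  · intro hxy
    have hy : y ∈ P (hP.index x) := hg.eq_of_apply_eq hP hx (hP.mem_index y) hxy ▸ hP.mem_index y
    rw [k_of_mem hx, k_of_mem hy, hxy]

lemma greenD_of_mk_image_eq (hP : IsPartition P) (hf : MemB P f χf) (hg : MemB P g χg)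
    (π : Equiv.Perm I) (hmk : ∀ j, #(g '' P j) = #(f '' P (π j))) : GreenD P f g := by
  obtain ⟨k, χk, hk, himage, hker⟩ := exists_image_eq_and_ker_eq hP hf hg π hmk
  exact ⟨k, χk, hk, greenL_of_image_eq hP π.symm fun i => by rw [himage, π.apply_symm_apply],
    greenR_of_ker_eq hP hk hg hker⟩

end Green

theorem D_eq_J_class_of_two_consecutive_general {X I : Type*} (P : I → Set X)
    (hP : IsPartition P) (f : X → X) (χf : I → I) (hf : MemB P f χf)
    (hlam : ∃ lam1 : Cardinal, ∀ i,
      Cardinal.mk ↥(f '' (P i)) = lam1 ∨ Cardinal.mk ↥(f '' (P i)) = Order.succ lam1) :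
    ∀ g χg, MemB P g χg → (GreenJ P f g ↔ GreenD P f g) := by
  intro g χg hg
  refine ⟨fun ⟨⟨h₁, χ₁, h₂, _, hh₁, _, hfg⟩, ⟨h₃, χ₃, h₄, _, hh₃, _, hgf⟩⟩ => ?_, GreenD.greenJ⟩
  obtain ⟨lam, hlam⟩ := hlam
  obtain ⟨π, hπ⟩ := exists_perm_eq_comp_of_le_of_le (μ := fun i => #(f '' P i))
    (ν := fun j => #(g '' P j)) hlam (.ofBijective χ₁ hh₁.2) (.ofBijective χ₃ hh₃.2)
    (fun i => mk_image_le_of_eq_comp (hh₁.1 i) hfg) (fun j => mk_image_le_of_eq_comp (hh₃.1 j) hgf)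
  exact greenD_of_mk_image_eq hP hf hg π hπ

/-- If all the cardinals `|f '' (P i)|` take at most two consecutive values
`λ₁` and `λ₂ = λ₁ + 1` (the successor cardinal), then the `D`-class and the
`J`-class of `f` in `B(X,P)` coincide. -/
theorem D_eq_J_class_of_two_consecutive {X I : Type*} [Nonempty X] (P : I → Set X)
    (hP : IsPartition P) (f : X → X) (χf : I → I) (hf : MemB P f χf)
    (hlam : ∃ lam1 : Cardinal, ∀ i,
      Cardinal.mk ↥(f '' (P i)) = lam1 ∨ Cardinal.mk ↥(f '' (P i)) = Order.succ lam1) :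
    ∀ g χg, MemB P g χg → (GreenJ P f g ↔ GreenD P f g) :=
  D_eq_J_class_of_two_consecutive_general P hP f χf hf hlam
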